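/- The centralizer of G₆ in Aff(3) is trivial: if (v,A) ∈ Aff(3) commutes with every element of G₆, then A = I and v = 0. -/

import Mathlib

/-! `Aff(3) = ℝ³ ⋊ GL(3,ℝ)`, realized as the group of affine self-equivalences of `ℝ³`
(with multiplication given by composition, so that `(v,A)(w,B) = (v + Aw, AB)`). -/

abbrev V3 : Type := Fin 3 → ℝ
abbrev Aff3 : Type := V3 ≃ᵃ[ℝ] V3

/-- The linear self-equivalence of `ℝ³` given by a diagonal matrix with entries `±1`. -/
noncomputable def diagLin (d : Fin 3 → ℝ) (hd : ∀ i, d i * d i = 1) : V3 ≃ₗ[ℝ] V3 where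
  toFun v := fun i => d i * v i
  invFun v := fun i => d i * v i
  map_add' u v := by funext i; simp [mul_add]
  map_smul' c v := by funext i; simp [smul_eq_mul]; ring
  left_inv v := by funext i; simp [← mul_assoc, hd i]
  right_inv v := by funext i; simp [← mul_assoc, hd i]

lemma sq_one_X : ∀ i, (![(1:ℝ),-1,-1]) i * (![(1:ℝ),-1,-1]) i = 1 := by
  intro i; fin_cases i <;> norm_num

lemma sq_one_Y : ∀ i, (![(-1:ℝ),1,-1]) i * (![(-1:ℝ),1,-1]) i = 1 := by
  intro i; fin_cases i <;> norm_num

/-- The affine transformation `x = (½e₁, X)`, acting by `w ↦ Xw + ½e₁`,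
where `X = diag[1,−1,−1]`. -/
noncomputable def affx : Aff3 :=
  ((diagLin ![1,-1,-1] sq_one_X).toAffineEquiv).trans
    (AffineEquiv.constVAdd ℝ V3 ![1/2, 0, 0])

/-- The affine transformation `y = (½(e₂−e₃), Y)`, acting by `w ↦ Yw + ½(e₂−e₃)`,
where `Y = diag[−1,1,−1]`. -/
noncomputable def affy : Aff3 :=
  ((diagLin ![-1,1,-1] sq_one_Y).toAffineEquiv).trans
    (AffineEquiv.constVAdd ℝ V3 ![0, 1/2, -1/2])

/-- `z = xy = (½(e₁−e₂+e₃), Z)`. -/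
noncomputable def affz : Aff3 := affx * affy

/-- The Hantzsche–Wendt group `G₆`, the subgroup of `Aff(3)` generated by `x` and `y`. -/
noncomputable def G6 : Subgroup Aff3 := Subgroup.closure {affx, affy}

/-- The translation subgroup `T = G₆ ∩ (ℝ³ × {I})`: the elements of `G₆`
whose linear part is the identity. -/
noncomputable def TT : Subgroup Aff3 :=
  G6 ⊓ (AffineEquiv.linearHom : Aff3 →* (V3 ≃ₗ[ℝ] V3)).ker

lemma affx_mem : affx ∈ G6 := Subgroup.subset_closure (by simp)
lemma affy_mem : affy ∈ G6 := Subgroup.subset_closure (by simp)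

/-- `x` as an element of `G₆`. -/
noncomputable def xg : G6 := ⟨affx, affx_mem⟩
/-- `y` as an element of `G₆`. -/
noncomputable def yg : G6 := ⟨affy, affy_mem⟩
/-- `z = xy` as an element of `G₆`. -/
noncomputable def zg : G6 := xg * yg

/-! Write `g = (v, A)`. If `g` commutes with `x` and `y`, then `A` commutes with
`X = diag[1,−1,−1]` and `Y = diag[−1,1,−1]`; these two sign patterns separate any two
coordinates, so `A` is diagonal. Evaluating `gx = xg` and `gy = yg` at the origin gives
`A(½e₁) + v = Xv + ½e₁` and `A(½(e₂−e₃)) + v = Yv + ½(e₂−e₃)`, six scalar equations which,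
for diagonal `A`, force `A = I` and `v = 0`. -/

open Matrix

theorem Matrix.apply_eq_zero_of_commute_diagonal {R n : Type*} [CommRing R] [NoZeroDivisors R]
    [Fintype n] [DecidableEq n] {M : Matrix n n R} {d : n → R} (h : Commute M (diagonal d))
    {i j : n} (hij : d i ≠ d j) : M i j = 0 := by
  have hij' : M i j * d j = d i * M i j := by
    rw [← mul_diagonal, ← diagonal_mul, h.eq]
  have : (d j - d i) * M i j = 0 := by linear_combination hij'
  exact (mul_eq_zero.mp this).resolve_left (sub_ne_zero.mpr hij.symm)

namespace AffineEquiv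

variable {R n : Type*} [CommRing R] [Fintype n] [DecidableEq n]

noncomputable def linearMatrixHom : ((n → R) ≃ᵃ[R] (n → R)) →* Matrix n n R :=
  (LinearMap.toMatrixAlgEquiv' : ((n → R) →ₗ[R] n → R) ≃ₐ[R] Matrix n n R).toMonoidHom.comp
    (LinearEquiv.automorphismGroup.toLinearMapMonoidHom.comp linearHom)

theorem linearMatrixHom_apply_apply (g : (n → R) ≃ᵃ[R] (n → R)) (i j : n) :
    linearMatrixHom g i j = g.linear (Pi.single j 1) i :=
  LinearMap.toMatrixAlgEquiv'_apply _ i j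

theorem apply_eq_linearMatrixHom_mulVec_add (g : (n → R) ≃ᵃ[R] (n → R)) (w : n → R) :
    g w = linearMatrixHom g *ᵥ w + g 0 := by
  have h : linearMatrixHom g *ᵥ w = g.linear w := LinearMap.toMatrix'_mulVec _ w
  rw [h]
  exact congrFun (AffineMap.decomp (g : (n → R) →ᵃ[R] (n → R))) w

theorem eq_one_of_linearMatrixHom_eq_one {g : (n → R) ≃ᵃ[R] (n → R)}
    (hM : linearMatrixHom g = 1) (h0 : g 0 = 0) : g = 1 := by
  ext w : 1
  rw [apply_eq_linearMatrixHom_mulVec_add, hM, h0, one_mulVec, add_zero, coe_one, id]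

theorem linearMatrixHom_eq_diagonal {g : (n → R) ≃ᵃ[R] (n → R)} {d t : n → R}
    (hg : ∀ w, g w = d * w + t) : linearMatrixHom g = diagonal d := by
  ext i j
  have h := (g : (n → R) →ᵃ[R] (n → R)).linearMap_vsub (Pi.single j 1) 0
  simp only [vsub_eq_sub, sub_zero, coe_toAffineMap, linear_toAffineMap, LinearEquiv.coe_coe] at h
  rw [linearMatrixHom_apply_apply, h, hg, hg]
  simp [diagonal_apply, Pi.single_apply]

theorem linearMatrixHom_mulVec_add_eq_of_commute {g h : (n → R) ≃ᵃ[R] (n → R)} {d t : n → R}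
    (hh : ∀ w, h w = d * w + t) (hgh : Commute g h) :
    linearMatrixHom g *ᵥ t + g 0 = d * g 0 + t := by
  have h0 : g (h 0) = h (g 0) := congrArg (· 0) hgh.eq
  rwa [apply_eq_linearMatrixHom_mulVec_add g, hh, hh, mul_zero, zero_add] at h0

end AffineEquiv

open AffineEquiv

theorem affx_apply (w : V3) : affx w = ![1, -1, -1] * w + ![1/2, 0, 0] := by
  funext i; simp [affx, diagLin, add_comm]

theorem affy_apply (w : V3) : affy w = ![-1, 1, -1] * w + ![0, 1/2, -1/2] := by
  funext i; simp [affy, diagLin, add_comm]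

theorem isDiag_of_commute_diagonal_X_Y {M : Matrix (Fin 3) (Fin 3) ℝ}
    (hX : Commute M (diagonal ![1, -1, -1])) (hY : Commute M (diagonal ![-1, 1, -1])) :
    M.IsDiag := by
  intro i j hij
  fin_cases i <;> fin_cases j
  · exact absurd rfl hij
  · exact apply_eq_zero_of_commute_diagonal hX (by norm_num)
  · exact apply_eq_zero_of_commute_diagonal hX (by norm_num [cons_val_two])
  · exact apply_eq_zero_of_commute_diagonal hX (by norm_num)
  · exact absurd rfl hij
  · exact apply_eq_zero_of_commute_diagonal hY (by norm_num [cons_val_two])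
  · exact apply_eq_zero_of_commute_diagonal hX (by norm_num [cons_val_two])
  · exact apply_eq_zero_of_commute_diagonal hY (by norm_num [cons_val_two])
  · exact absurd rfl hij

theorem eq_one_of_commute_affx_affy {g : Aff3} (hx : Commute g affx) (hy : Commute g affy) :
    g = 1 := by
  have hdiag : (linearMatrixHom g).IsDiag := isDiag_of_commute_diagonal_X_Y
    (linearMatrixHom_eq_diagonal affx_apply ▸ hx.map linearMatrixHom)
    (linearMatrixHom_eq_diagonal affy_apply ▸ hy.map linearMatrixHom)
  have htx := linearMatrixHom_mulVec_add_eq_of_commute affx_apply hx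
  have hty := linearMatrixHom_mulVec_add_eq_of_commute affy_apply hy
  have x0 := congrFun htx 0
  have x1 := congrFun htx 1
  have x2 := congrFun htx 2
  have y0 := congrFun hty 0
  have y1 := congrFun hty 1
  have y2 := congrFun hty 2
  simp only [Pi.add_apply, Pi.mul_apply, mulVec, dotProduct, Fin.sum_univ_three, cons_val]
    at x0 x1 x2 y0 y1 y2
  have v0 : g 0 0 = 0 := by
    linarith [hdiag (i := 0) (j := 1) (by decide), hdiag (i := 0) (j := 2) (by decide)]
  have v1 : g 0 1 = 0 := by linarith [hdiag (i := 1) (j := 0) (by decide)]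
  have v2 : g 0 2 = 0 := by linarith [hdiag (i := 2) (j := 0) (by decide)]
  have m0 : linearMatrixHom g 0 0 = 1 := by linarith
  have m1 : linearMatrixHom g 1 1 = 1 := by linarith [hdiag (i := 1) (j := 2) (by decide)]
  have m2 : linearMatrixHom g 2 2 = 1 := by linarith [hdiag (i := 2) (j := 1) (by decide)]
  refine eq_one_of_linearMatrixHom_eq_one ?_ (by ext i; fin_cases i <;> assumption)
  rw [← hdiag.diagonal_diag, ← diagonal_one]
  congr 1
  ext i; fin_cases i <;> assumption

/-- The centralizer of `G₆` in `Aff(3)` is trivial: if an element of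
`Aff(3)` commutes with every element of `G₆`, then it is the identity
(its linear part is `I` and its translation part is `0`). -/
theorem statement1 : Subgroup.centralizer (G6 : Set Aff3) = ⊥ := by
  refine eq_bot_iff.2 fun g hg => Subgroup.mem_bot.2 ?_
  rw [Subgroup.mem_centralizer_iff] at hg
  exact eq_one_of_commute_affx_affy (hg affx affx_mem).symm (hg affy affy_mem).symm
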